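/- arXiv:1201.6499 — 3 statements merged into one kernel-verified Lean document; each statement's English description precedes it below -/
import Mathlib

section
/- Let f : ℝ → ℝ be continuously differentiable, strictly increasing on [0,∞), with f(0) = 0, f strictly convex on [0,γ₀] and strictly concave on [γ₀,∞) for some γ₀ > 0 (S-shaped), and f bounded above with limit 1 at infinity. Then there exists a unique γ* > 0 satisfying f(γ*) = γ* · f'(γ*). -/
open Set Filter Topology

/-!
Put `g γ = γ * f' γ - f γ`. On `(0, γ₀]` strict convexity and `f 0 = 0` give `f γ / γ < f' γ`,
so `g > 0` there. On `[γ₀, ∞)` strict concavity makes `g` strictly decreasing, and comparing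
`f'(2m)` with the chord over `[m, 2m]` gives `g (2m) ≤ f (2m) - 2 f m → 1 - 2 < 0`. Hence `g` has
exactly one positive zero, found by the intermediate value theorem.
-/

theorem StrictConvexOn.apply_lt_mul_deriv {s : Set ℝ} {f : ℝ → ℝ} {x : ℝ}
    (hf : StrictConvexOn ℝ s f) (h0 : (0 : ℝ) ∈ s) (hx : x ∈ s) (hx0 : 0 < x) (hf0 : f 0 = 0)
    (hfd : DifferentiableAt ℝ f x) : f x < x * deriv f x := by
  have hslope := hf.slope_lt_deriv h0 hx hx0 hfd
  rwa [slope_def_field, hf0, sub_zero, sub_zero, div_lt_iff₀' hx0] at hslope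

theorem StrictConcaveOn.strictAntiOn_mul_deriv_sub {s : Set ℝ} {f : ℝ → ℝ}
    (hf : StrictConcaveOn ℝ s f) (hs : ∀ x ∈ s, 0 ≤ x) (hfd : ∀ x ∈ s, DifferentiableAt ℝ f x) :
    StrictAntiOn (fun x => x * deriv f x - f x) s := by
  intro a ha b hb hab
  have hchord : deriv f b * (b - a) < f b - f a := by
    have := hf.deriv_lt_slope ha hb hab (hfd b hb)
    rwa [slope_def_field, lt_div_iff₀ (sub_pos.mpr hab)] at this
  have hderiv : 0 ≤ a * (deriv f a - deriv f b) :=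
    mul_nonneg (hs a ha) (sub_nonneg.mpr (hf.strictAntiOn_deriv hfd ha hb hab).le)
  dsimp only
  linarith

theorem ConcaveOn.eventually_mul_deriv_lt {a L : ℝ} {f : ℝ → ℝ}
    (hf : ConcaveOn ℝ (Ici a) f) (hfd : ∀ x ∈ Ici a, DifferentiableAt ℝ f x)
    (hL : 0 < L) (hlim : Tendsto f atTop (𝓝 L)) :
    ∀ᶠ x in atTop, x * deriv f x < f x := by
  have hdouble : Tendsto (fun m => f (2 * m) - 2 * f m) atTop (𝓝 (L - 2 * L)) :=
    (hlim.comp (tendsto_id.const_mul_atTop two_pos)).sub (hlim.const_mul 2)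
  have hneg : ∀ᶠ m in atTop, f (2 * m) - 2 * f m < 0 ∧ max a 0 < m :=
    (hdouble.eventually (gt_mem_nhds (by linarith))).and (eventually_gt_atTop _)
  filter_upwards [(tendsto_id.atTop_div_const two_pos).eventually hneg] with x hx
  obtain ⟨m, rfl⟩ : ∃ m, x = 2 * m := ⟨x / 2, by ring⟩
  rw [id, mul_div_cancel_left₀ m two_ne_zero] at hx
  obtain ⟨hx, hm⟩ := hx
  have hma : a ≤ m := (le_max_left a 0).trans hm.le
  have hm0 : 0 < m := (le_max_right a 0).trans_lt hm
  have hchord : deriv f (2 * m) * m ≤ f (2 * m) - f m := by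
    have := hf.deriv_le_slope hma (by simp only [mem_Ici]; linarith) (by linarith)
      (hfd (2 * m) (by simp only [mem_Ici]; linarith))
    rwa [slope_def_field, le_div_iff₀ (by linarith), show 2 * m - m = m by ring] at this
  linarith

theorem unique_optimal_sinr_general
    (f : ℝ → ℝ) (γ₀ : ℝ) (hγ₀ : 0 < γ₀)
    (hC1 : ContDiff ℝ 1 f)
    (hf0 : f 0 = 0)
    (hconv : StrictConvexOn ℝ (Icc 0 γ₀) f)
    (hconc : StrictConcaveOn ℝ (Ici γ₀) f)
    (hlim : Filter.Tendsto f Filter.atTop (nhds 1)) :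
    ∃! γ : ℝ, 0 < γ ∧ f γ = γ * deriv f γ := by
  have hfd : Differentiable ℝ f := hC1.differentiable one_ne_zero
  have hcont : Continuous fun γ => γ * deriv f γ - f γ :=
    (continuous_id.mul (hC1.continuous_deriv le_rfl)).sub hC1.continuous
  have hbelow_γ₀ : ∀ γ ∈ Ioc 0 γ₀, f γ < γ * deriv f γ := fun γ hγ =>
    hconv.apply_lt_mul_deriv ⟨le_rfl, hγ₀.le⟩ ⟨hγ.1.le, hγ.2⟩ hγ.1 hf0 (hfd γ)
  have hanti : StrictAntiOn (fun γ => γ * deriv f γ - f γ) (Ici γ₀) :=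
    hconc.strictAntiOn_mul_deriv_sub (fun x hx => hγ₀.le.trans hx) fun x _ => hfd x
  obtain ⟨b, hb_neg, hb⟩ := ((hconc.concaveOn.eventually_mul_deriv_lt (fun x _ => hfd x)
    one_pos hlim).and (eventually_gt_atTop γ₀)).exists
  obtain ⟨c, hc, hc0⟩ := intermediate_value_Ioo' hb.le hcont.continuousOn
    ⟨sub_neg.mpr hb_neg, sub_pos.mpr (hbelow_γ₀ γ₀ ⟨hγ₀, le_rfl⟩)⟩
  refine ⟨c, ⟨hγ₀.trans hc.1, (sub_eq_zero.mp hc0).symm⟩, ?_⟩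
  rintro γ ⟨hγ, hγc⟩
  have hγγ₀ : γ₀ < γ := by
    by_contra! hle
    exact (hbelow_γ₀ γ ⟨hγ, hle⟩).ne hγc
  exact hanti.injOn hγγ₀.le hc.1.le ((sub_eq_zero.mpr hγc.symm).trans hc0.symm)

theorem unique_optimal_sinr
    (f : ℝ → ℝ) (γ₀ : ℝ) (hγ₀ : 0 < γ₀)
    (hC1 : ContDiff ℝ 1 f)
    (hmono : StrictMonoOn f (Ici 0))
    (hf0 : f 0 = 0)
    (hconv : StrictConvexOn ℝ (Icc 0 γ₀) f)
    (hconc : StrictConcaveOn ℝ (Ici γ₀) f)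
    (hbdd : BddAbove (Set.range f))
    (hlim : Filter.Tendsto f Filter.atTop (nhds 1)) :
    ∃! γ : ℝ, 0 < γ ∧ f γ = γ * deriv f γ :=
  unique_optimal_sinr_general f γ₀ hγ₀ hC1 hf0 hconv hconc hlim
end

section
/- Let K : Fin D → ℝ with K l > 0, and for each l let t_l(p) = K l · p · g(p) where g : ℝ≥0 → [0,1] with the property that t_l(p)/p ≤ K l · M for all p > 0 (M = sup of g), each bound attained at a unique p_l* > 0. Then sup over nonzero P : Fin D → ℝ≥0 of (∑ l, t_l(P l))/(∑ l, P l) equals M · (max over l of K l), and it is attained exactly by vectors supported on carriers l maximizing K l with P l = p_l*. -/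
open Set Finset

theorem multicarrier_utility_sup_and_attainment
    (D : ℕ) (hD : 1 ≤ D) (K : Fin D → ℝ) (hK : ∀ l, 0 < K l)
    (g : ℝ → ℝ) (hg01 : ∀ p : ℝ, 0 ≤ p → g p ∈ Icc (0 : ℝ) 1)
    (M : ℝ) (hM : IsLUB (g '' Ici 0) M)
    (t : Fin D → ℝ → ℝ) (ht : ∀ l p, t l p = K l * p * g p)
    (hbound : ∀ l, ∀ p : ℝ, 0 < p → t l p / p ≤ K l * M)
    (pstar : Fin D → ℝ) (hpstar_pos : ∀ l, 0 < pstar l)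
    (hattain : ∀ l, t l (pstar l) / pstar l = K l * M)
    (huniq : ∀ l, ∀ p : ℝ, 0 < p → t l p / p = K l * M → p = pstar l)
    (Kmax : ℝ) (hKmax : IsGreatest (Set.range K) Kmax) :
    IsGreatest
      {r : ℝ | ∃ P : Fin D → ℝ, (∀ l, 0 ≤ P l) ∧ P ≠ 0 ∧
          r = (∑ l, t l (P l)) / (∑ l, P l)}
      (M * Kmax) ∧
    (∀ P : Fin D → ℝ, (∀ l, 0 ≤ P l) → P ≠ 0 →
        ((∑ l, t l (P l)) / (∑ l, P l) = M * Kmax ↔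
          ∀ l, P l ≠ 0 → K l = Kmax ∧ P l = pstar l)) := by
  -- basic facts
  obtain ⟨l0, hl0⟩ := hKmax.1
  have hKmax_pos : 0 < Kmax := hl0 ▸ hK l0
  have ht0 : ∀ l, t l 0 = 0 := fun l => by rw [ht]; ring
  -- g (pstar l) = M
  have hgstar : ∀ l, g (pstar l) = M := by
    intro l
    have h := (div_eq_iff (hpstar_pos l).ne').1 (hattain l)
    rw [ht] at h
    have h3 : K l * pstar l * g (pstar l) = K l * pstar l * M := by rw [h]; ring
    exact mul_left_cancel₀ (mul_pos (hK l) (hpstar_pos l)).ne' h3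
  -- M > 0
  have hM0 : 0 ≤ M := (hgstar l0) ▸ (hg01 (pstar l0) (hpstar_pos l0).le).1
  have hMpos : 0 < M := by
    rcases hM0.lt_or_eq with h | h
    · exact h
    · exfalso
      have hgz : ∀ p : ℝ, 0 ≤ p → g p = 0 := by
        intro p hp
        have hle : g p ≤ M := hM.1 ⟨p, hp, rfl⟩
        have := (hg01 p hp).1
        linarith [h ▸ hle]
      have hp1 : (0:ℝ) < pstar l0 + 1 := by linarith [hpstar_pos l0]
      have : pstar l0 + 1 = pstar l0 := by
        apply huniq l0 _ hp1
        rw [ht, hgz _ hp1.le, ← h]; ring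
      linarith
  -- pointwise bound: t l p ≤ K l * M * p for p ≥ 0, hence ≤ M * Kmax * p
  have hb : ∀ l (p : ℝ), 0 ≤ p → t l p ≤ M * Kmax * p := by
    intro l p hp
    rcases hp.lt_or_eq with hp | hp
    · have h1 := hbound l p hp
      have h2 : t l p ≤ K l * M * p := by
        rw [div_le_iff₀ hp] at h1; exact h1
      have h3 : K l ≤ Kmax := hKmax.2 ⟨l, rfl⟩
      nlinarith [mul_le_mul_of_nonneg_right (mul_le_mul_of_nonneg_right h3 hM0) hp.le]
    · rw [← hp, ht0]; simp
  -- positivity of sums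
  have spos : ∀ P : Fin D → ℝ, (∀ l, 0 ≤ P l) → P ≠ 0 → 0 < ∑ l, P l := by
    intro P hP hPne
    obtain ⟨l, hl⟩ := Function.ne_iff.1 hPne
    exact Finset.sum_pos' (fun i _ => hP i) ⟨l, Finset.mem_univ l, (hP l).lt_of_ne' hl⟩
  -- upper bound for the ratio
  have hub : ∀ P : Fin D → ℝ, (∀ l, 0 ≤ P l) → P ≠ 0 →
      (∑ l, t l (P l)) / (∑ l, P l) ≤ M * Kmax := by
    intro P hP hPne
    have hs := spos P hP hPne
    rw [div_le_iff₀ hs]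
    calc ∑ l, t l (P l) ≤ ∑ l, M * Kmax * P l :=
          Finset.sum_le_sum (fun l _ => hb l (P l) (hP l))
      _ = M * Kmax * ∑ l, P l := by rw [Finset.mul_sum]
  -- attained at the single-carrier vector
  have hmem : M * Kmax ∈ {r : ℝ | ∃ P : Fin D → ℝ, (∀ l, 0 ≤ P l) ∧ P ≠ 0 ∧
      r = (∑ l, t l (P l)) / (∑ l, P l)} := by
    refine ⟨fun l => if l = l0 then pstar l0 else 0, fun l => ?_, ?_, ?_⟩
    · by_cases h : l = l0 <;> simp [h, (hpstar_pos l0).le]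
    · intro h
      have := congrFun h l0
      simp at this
      exact absurd this (hpstar_pos l0).ne'
    · have h1 : (∑ l, t l (if l = l0 then pstar l0 else 0)) = t l0 (pstar l0) := by
        rw [Finset.sum_eq_single l0]
        · simp
        · intro b _ hb'; simp [hb', ht0]
        · simp
      have h2 : (∑ l, (if l = l0 then pstar l0 else 0)) = pstar l0 := by
        rw [Finset.sum_eq_single l0] <;> simp +contextual
      rw [h1, h2, hattain l0, hl0]; ring
  refine ⟨⟨hmem, ?_⟩, ?_⟩
  · rintro r ⟨P, hP, hPne, rfl⟩
    exact hub P hP hPne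
  · intro P hP hPne
    have hs := spos P hP hPne
    constructor
    · intro heq l hl
      have hPl : 0 < P l := (hP l).lt_of_ne' hl
      have hsum : ∑ l, t l (P l) = ∑ l, M * Kmax * P l := by
        have h := (div_eq_iff hs.ne').1 heq
        rw [h, Finset.mul_sum]
      have heach := (Finset.sum_eq_sum_iff_of_le
        (fun i (_ : i ∈ Finset.univ) => hb i (P i) (hP i))).1 hsum l (Finset.mem_univ l)
      -- t l (P l) = M * Kmax * P l
      have hratio : t l (P l) / P l = M * Kmax := by
        rw [heach]; field_simp
      have hKl : K l = Kmax := by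
        have h1 : M * Kmax ≤ K l * M := hratio ▸ hbound l (P l) hPl
        have h2 : K l ≤ Kmax := hKmax.2 ⟨l, rfl⟩
        nlinarith
      refine ⟨hKl, huniq l (P l) hPl ?_⟩
      rw [hratio, hKl]; ring
    · intro hsupp
      have hsum : ∑ l, t l (P l) = ∑ l, M * Kmax * P l := by
        apply Finset.sum_congr rfl
        intro l _
        by_cases h : P l = 0
        · rw [h, ht0]; ring
        · obtain ⟨hKl, hPl⟩ := hsupp l h
          have h2 : t l (pstar l) = K l * M * pstar l :=
            (div_eq_iff (hpstar_pos l).ne').1 (hattain l)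
          rw [hPl, h2, hKl]; ring
      rw [hsum, ← Finset.mul_sum, mul_div_assoc, div_self hs.ne', mul_one]
end

section
/- With T as above (γ*² g₁ g₂ < h₁ h₂), T is a contraction on ℝ≥0² with respect to the weighted sup-norm ‖(x,y)‖ = max(|x|/w₁, |y|/w₂) for suitable weights w₁, w₂ > 0, and hence the Gauss–Seidel iteration p₁(n+1) = γ*(σ² + g₂ p₂(n))/h₁, p₂(n+1) = γ*(σ² + g₁ p₁(n+1))/h₂ converges to the unique fixed point (p₁', p₂') from any starting point in ℝ≥0². -/
/-!
With `a = γ* g₂ / h₁`, `b = γ* g₁ / h₂` and `cᵢ = γ* σ² / hᵢ`, the best response is the affine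
map `(p₁, p₂) ↦ (c₁ + a p₂, c₂ + b p₁)`, and the feasibility condition says `a b < 1`.
Its linear part swaps the coordinates, so the weights `√a`, `√b` make both coordinates shrink by
exactly `√(a b)`. One Gauss–Seidel sweep sends `p₁` to `c₁ + a c₂ + a b p₁`, so the error of the
first user shrinks by the factor `a b` per sweep and the second user's error follows it.
-/

open Filter Topology

theorem max_abs_mul_div_sqrt_eq {a b : ℝ} (ha : 0 < a) (hb : 0 < b) (u v : ℝ) :
    max (|a * v| / √a) (|b * u| / √b) = √(a * b) * max (|u| / √a) (|v| / √b) := by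
  have hsa : 0 < √a := Real.sqrt_pos.2 ha
  have hsb : 0 < √b := Real.sqrt_pos.2 hb
  rw [abs_mul, abs_mul, abs_of_pos ha, abs_of_pos hb, Real.sqrt_mul ha.le,
    mul_max_of_nonneg _ _ (by positivity), max_comm]
  congr 1
  · field_simp
    rw [Real.sq_sqrt hb.le, mul_comm]
  · field_simp
    rw [Real.sq_sqrt ha.le, mul_comm]

theorem tendsto_of_forall_sub_eq_mul_sub {x : ℕ → ℝ} {p r : ℝ} (hr : |r| < 1)
    (h : ∀ n, x (n + 1) - p = r * (x n - p)) : Tendsto x atTop (𝓝 p) := by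
  have hx : ∀ n, x n = p + r ^ n * (x 0 - p) := by
    intro n
    induction n with
    | zero => simp
    | succ n ih => rw [pow_succ]; linear_combination h n + r * ih
  have hlim := ((tendsto_pow_atTop_nhds_zero_of_abs_lt_one hr).mul_const (x 0 - p)).const_add p
  rw [zero_mul, add_zero] at hlim
  exact hlim.congr fun n ↦ (hx n).symm

theorem tendsto_gaussSeidel_of_abs_mul_lt_one {a b c₁ c₂ p₁ p₂ : ℝ} {q₁ q₂ : ℕ → ℝ}
    (hab : |a * b| < 1) (hp₁ : p₁ = c₁ + a * p₂) (hp₂ : p₂ = c₂ + b * p₁)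
    (hq₁ : ∀ n, q₁ (n + 1) = c₁ + a * q₂ n) (hq₂ : ∀ n, q₂ (n + 1) = c₂ + b * q₁ (n + 1)) :
    Tendsto q₁ atTop (𝓝 p₁) ∧ Tendsto q₂ atTop (𝓝 p₂) := by
  have h₁ : Tendsto (fun n ↦ q₁ (n + 1)) atTop (𝓝 p₁) :=
    tendsto_of_forall_sub_eq_mul_sub hab fun n ↦ by
      rw [hq₁ (n + 1), hq₂ n]
      linear_combination (-1 : ℝ) * hp₁ - a * hp₂
  have h₂ : Tendsto (fun n ↦ q₂ (n + 1)) atTop (𝓝 p₂) := by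
    rw [hp₂]
    simpa only [hq₂] using (h₁.const_mul b).const_add c₂
  exact ⟨(tendsto_add_atTop_iff_nat 1).mp h₁, (tendsto_add_atTop_iff_nat 1).mp h₂⟩

theorem best_response_contraction_and_convergence_general
    (γs σ2 g₁ g₂ h₁ h₂ : ℝ)
    (hγs : 0 < γs) (hg₁ : 0 < g₁) (hg₂ : 0 < g₂)
    (hh₁ : 0 < h₁) (hh₂ : 0 < h₂)
    (hfeas : γs ^ 2 * g₁ * g₂ < h₁ * h₂)
    (T : ℝ × ℝ → ℝ × ℝ)
    (hT : ∀ p : ℝ × ℝ, T p = (γs * (σ2 + g₂ * p.2) / h₁, γs * (σ2 + g₁ * p.1) / h₂))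
    (p₁' p₂' : ℝ)
    (hp₁' : p₁' = γs * σ2 * (h₂ + γs * g₂) / (h₁ * h₂ - γs ^ 2 * g₁ * g₂))
    (hp₂' : p₂' = γs * σ2 * (h₁ + γs * g₁) / (h₁ * h₂ - γs ^ 2 * g₁ * g₂)) :
    (∃ w₁ > (0 : ℝ), ∃ w₂ > (0 : ℝ), ∃ ρ : ℝ, 0 ≤ ρ ∧ ρ < 1 ∧
      ∀ x y : ℝ × ℝ, 0 ≤ x.1 → 0 ≤ x.2 → 0 ≤ y.1 → 0 ≤ y.2 →
        max (|(T x).1 - (T y).1| / w₁) (|(T x).2 - (T y).2| / w₂) ≤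
          ρ * max (|x.1 - y.1| / w₁) (|x.2 - y.2| / w₂)) ∧
    ∀ q₁ q₂ : ℕ → ℝ, 0 ≤ q₁ 0 → 0 ≤ q₂ 0 →
      (∀ n, q₁ (n + 1) = γs * (σ2 + g₂ * q₂ n) / h₁) →
      (∀ n, q₂ (n + 1) = γs * (σ2 + g₁ * q₁ (n + 1)) / h₂) →
      Tendsto q₁ atTop (nhds p₁') ∧ Tendsto q₂ atTop (nhds p₂') := by
  have hfix : p₁' = γs * σ2 / h₁ + γs * g₂ / h₁ * p₂' ∧
      p₂' = γs * σ2 / h₂ + γs * g₁ / h₂ * p₁' := by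
    set D := h₁ * h₂ - γs ^ 2 * g₁ * g₂ with hD_def
    have hD : D ≠ 0 := (sub_pos.2 hfeas).ne'
    constructor <;> rw [hp₁', hp₂'] <;> field_simp <;> rw [hD_def] <;> ring
  set a := γs * g₂ / h₁
  set b := γs * g₁ / h₂
  have ha : 0 < a := by positivity
  have hb : 0 < b := by positivity
  have hab : a * b < 1 := by
    rw [div_mul_div_comm, div_lt_one (by positivity)]
    linear_combination hfeas
  have hT' : ∀ p, T p = (γs * σ2 / h₁ + a * p.2, γs * σ2 / h₂ + b * p.1) := fun p ↦ by
    rw [hT]; ext <;> ring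
  refine ⟨⟨√a, Real.sqrt_pos.2 ha, √b, Real.sqrt_pos.2 hb, √(a * b), Real.sqrt_nonneg _,
    (Real.sqrt_lt' one_pos).2 (by rwa [one_pow]), fun x y _ _ _ _ ↦ ?_⟩,
    fun q₁ q₂ _ _ hq₁ hq₂ ↦ ?_⟩
  · simp only [hT', add_sub_add_left_eq_sub, ← mul_sub]
    exact (max_abs_mul_div_sqrt_eq ha hb _ _).le
  · refine tendsto_gaussSeidel_of_abs_mul_lt_one (by rwa [abs_of_pos (mul_pos ha hb)])
      hfix.1 hfix.2 (fun n ↦ ?_) (fun n ↦ ?_)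
    · rw [hq₁]; ring
    · rw [hq₂]; ring

theorem best_response_contraction_and_convergence
    (γs σ2 g₁ g₂ h₁ h₂ : ℝ)
    (hγs : 0 < γs) (hσ : 0 < σ2) (hg₁ : 0 < g₁) (hg₂ : 0 < g₂)
    (hh₁ : 0 < h₁) (hh₂ : 0 < h₂)
    (hfeas : γs ^ 2 * g₁ * g₂ < h₁ * h₂)
    (T : ℝ × ℝ → ℝ × ℝ)
    (hT : ∀ p : ℝ × ℝ, T p = (γs * (σ2 + g₂ * p.2) / h₁, γs * (σ2 + g₁ * p.1) / h₂))
    (p₁' p₂' : ℝ)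
    (hp₁' : p₁' = γs * σ2 * (h₂ + γs * g₂) / (h₁ * h₂ - γs ^ 2 * g₁ * g₂))
    (hp₂' : p₂' = γs * σ2 * (h₁ + γs * g₁) / (h₁ * h₂ - γs ^ 2 * g₁ * g₂)) :
    (∃ w₁ > (0 : ℝ), ∃ w₂ > (0 : ℝ), ∃ ρ : ℝ, 0 ≤ ρ ∧ ρ < 1 ∧
      ∀ x y : ℝ × ℝ, 0 ≤ x.1 → 0 ≤ x.2 → 0 ≤ y.1 → 0 ≤ y.2 →
        max (|(T x).1 - (T y).1| / w₁) (|(T x).2 - (T y).2| / w₂) ≤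
          ρ * max (|x.1 - y.1| / w₁) (|x.2 - y.2| / w₂)) ∧
    ∀ q₁ q₂ : ℕ → ℝ, 0 ≤ q₁ 0 → 0 ≤ q₂ 0 →
      (∀ n, q₁ (n + 1) = γs * (σ2 + g₂ * q₂ n) / h₁) →
      (∀ n, q₂ (n + 1) = γs * (σ2 + g₁ * q₁ (n + 1)) / h₂) →
      Tendsto q₁ atTop (nhds p₁') ∧ Tendsto q₂ atTop (nhds p₂') :=
  best_response_contraction_and_convergence_general γs σ2 g₁ g₂ h₁ h₂ hγs hg₁ hg₂ hh₁ hh₂ hfeas T hT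
    p₁' p₂' hp₁' hp₂'
end
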